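/- For every positive integer k, α_k(K_2 □ C_{2k+1}) = 2 = min(α_k(K_2) · |V(C_{2k+1})|, α_k(C_{2k+1}) · |V(K_2)|), i.e., the upper bound α_k(G1 □ G2) ≤ min(α_k(G1)·|V(G2)|, α_k(G2)·|V(G1)|) is attained with G1 = K_2 and G2 = C_{2k+1}. -/

import Mathlib

/-!
Two vertices `u`, `v` of `C_n` are at distance `min ((v - u) mod n, (u - v) mod n) ≤ n / 2`:
walking forward gives the upper bound, and the circular distance from `u` changes by at most one
along an edge, which gives the lower bound. So any two vertices of `C_{2k+1}`, and for `k ≥ 1`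
any two vertices of `K_2`, are within distance `k`, and both graphs have `α_k = 1`.
Distances add in a box product, so each fibre `{a} × C_{2k+1}` meets a `k`-independent set at
most once, whence `α_k(K_2 □ C_{2k+1}) ≤ 2`; the vertices `(0, 0)` and `(1, k)`, at distance
`1 + k`, attain it.
-/

open SimpleGraph

/-- The `k`-independence number: the maximum size of a set of vertices at pairwise
distance greater than `k`. -/
noncomputable def kIndepNum {V : Type*} [Fintype V] (G : SimpleGraph V) (k : ℕ) : ℕ :=
  sSup {n | ∃ s : Finset V, s.card = n ∧ ∀ u ∈ s, ∀ v ∈ s, u ≠ v → (k : ℕ∞) < G.edist u v}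

theorem Fin.val_sub_eq_ite {n : ℕ} (a b : Fin n) :
    (a - b).val = if b ≤ a then a.val - b.val else n + a.val - b.val := by
  split_ifs with h
  · exact Fin.sub_val_of_le h
  · exact Fin.coe_sub_iff_lt.mpr (not_le.mp h)

namespace SimpleGraph

variable {V : Type*} {G : SimpleGraph V}

theorem Walk.apply_le_apply_add_length (f : V → ℕ) (hf : ∀ ⦃x y⦄, G.Adj x y → f y ≤ f x + 1)
    {u v : V} (p : G.Walk u v) : f v ≤ f u + p.length := by
  induction p with
  | nil => simp
  | cons h p ih => have := hf h; rw [Walk.length_cons]; omega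

theorem apply_le_apply_add_edist (f : V → ℕ) (hf : ∀ ⦃x y⦄, G.Adj x y → f y ≤ f x + 1)
    (u v : V) : (f v : ℕ∞) ≤ f u + G.edist u v := by
  by_cases huv : G.Reachable u v
  · obtain ⟨p, hp⟩ := huv.exists_walk_length_eq_edist
    rw [← hp]
    exact_mod_cast p.apply_le_apply_add_length f hf
  · simp [edist_eq_top_of_not_reachable huv]

open Fin.CommRing in
theorem cycleGraph_edist_add_natCast_le {n : ℕ} [NeZero n] (u : Fin n) (m : ℕ) :
    (cycleGraph n).edist u (u + (m : Fin n)) ≤ m := by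
  induction m with
  | zero => simp
  | succ m ih =>
    have hstep : (cycleGraph n).edist (u + (m : Fin n)) (u + (m : Fin n) + 1) ≤ 1 := by
      rw [edist_le_one_iff_adj_or_eq]
      obtain _ | _ | n := n
      · exact (NeZero.ne 0 rfl).elim
      · exact .inr (Subsingleton.elim (α := Fin 1) _ _)
      · exact .inl (cycleGraph_adj.mpr (.inr (by simp)))
    calc (cycleGraph n).edist u (u + ((m + 1 : ℕ) : Fin n))
        ≤ (cycleGraph n).edist u (u + (m : Fin n)) +
            (cycleGraph n).edist (u + (m : Fin n)) (u + (m : Fin n) + 1) := by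
          rw [Nat.cast_succ, ← add_assoc]
          exact SimpleGraph.edist_triangle
      _ ≤ m + 1 := add_le_add ih hstep
      _ = (m + 1 : ℕ) := by push_cast; rfl

theorem cycleGraph_edist {n : ℕ} (u v : Fin n) :
    (cycleGraph n).edist u v = min (v - u).val (u - v).val := by
  have : NeZero n := NeZero.of_pos u.pos
  apply le_antisymm
  · rw [Nat.mono_cast.map_min]
    refine le_min ?_ ?_
    · simpa using cycleGraph_edist_add_natCast_le u (v - u).val
    · simpa [SimpleGraph.edist_comm] using cycleGraph_edist_add_natCast_le v (u - v).val
  · have hstep : ∀ ⦃x y : Fin n⦄, (cycleGraph n).Adj x y →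
        min (y - u).val (u - y).val ≤ min (x - u).val (u - x).val + 1 := by
      intro x y h
      rw [cycleGraph_adj'] at h
      simp only [Fin.val_sub_eq_ite, Fin.le_def] at *
      have := y.isLt
      split_ifs at * <;> omega
    simpa using apply_le_apply_add_edist (fun w ↦ min (w - u).val (u - w).val) hstep u v

theorem ediam_cycleGraph_le (n : ℕ) : (cycleGraph n).ediam ≤ (n / 2 : ℕ) := by
  refine ediam_le_iff.mpr fun u v ↦ ?_
  have := u.isLt
  have := v.isLt
  have hmin : min (v - u).val (u - v).val ≤ n / 2 := by
    simp only [Fin.val_sub_eq_ite, Fin.le_def]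
    split_ifs <;> omega
  rw [cycleGraph_edist]
  exact_mod_cast hmin

end SimpleGraph

section KIndependence

variable {V α β : Type*}

def IsKIndepSet (G : SimpleGraph V) (k : ℕ) (s : Finset V) : Prop :=
  (s : Set V).Pairwise fun u v ↦ (k : ℕ∞) < G.edist u v

variable {k : ℕ}

theorem card_le_kIndepNum [Fintype V] {G : SimpleGraph V} {s : Finset V}
    (hs : IsKIndepSet G k s) : s.card ≤ kIndepNum G k :=
  le_csSup ⟨Fintype.card V, by rintro _ ⟨t, rfl, -⟩; exact t.card_le_univ⟩
    ⟨s, rfl, fun _ hu _ hv ↦ hs hu hv⟩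

theorem kIndepNum_le [Fintype V] {G : SimpleGraph V} {n : ℕ}
    (h : ∀ s : Finset V, IsKIndepSet G k s → s.card ≤ n) : kIndepNum G k ≤ n :=
  csSup_le ⟨0, ∅, rfl, by simp⟩ (by rintro _ ⟨s, rfl, hs⟩; exact h s fun _ hu _ hv ↦ hs _ hu _ hv)

theorem kIndepNum_eq_one_of_ediam_le [Fintype V] [Nonempty V] {G : SimpleGraph V}
    (h : G.ediam ≤ k) : kIndepNum G k = 1 := by
  refine le_antisymm (kIndepNum_le fun s hs ↦ Finset.card_le_one.mpr fun u hu v hv ↦ ?_) ?_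
  · by_contra huv
    exact (hs hu hv huv).not_ge (edist_le_ediam.trans h)
  · simpa using card_le_kIndepNum (G := G) (k := k) (s := {Classical.arbitrary V})
      (by simp [IsKIndepSet])

theorem kIndepNum_completeGraph [Fintype V] [Nonempty V] (hk : 0 < k) :
    kIndepNum (completeGraph V) k = 1 :=
  kIndepNum_eq_one_of_ediam_le <| ediam_le_iff.mpr fun u v ↦
    (edist_le_one_iff_adj_or_eq.mpr (ne_or_eq u v)).trans (by exact_mod_cast hk)

theorem kIndepNum_boxProd_le [Fintype α] [Fintype β] (G : SimpleGraph α) (H : SimpleGraph β) :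
    kIndepNum (G □ H) k ≤ Fintype.card α * kIndepNum H k := by
  classical
  refine kIndepNum_le fun s hs ↦ ?_
  have hfiber (a : α) : (s.filter (·.1 = a)).card ≤ kIndepNum H k := by
    have hinj : Set.InjOn Prod.snd (s.filter (·.1 = a) : Set (α × β)) := by
      intro x hx y hy hxy
      simp only [Finset.mem_coe, Finset.mem_filter] at hx hy
      exact Prod.ext (hx.2.trans hy.2.symm) hxy
    rw [← Finset.card_image_of_injOn hinj]
    refine card_le_kIndepNum ?_
    rw [IsKIndepSet, Finset.coe_image, hinj.pairwise_image]
    intro x hx y hy hxy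
    simp only [Finset.mem_coe, Finset.mem_filter] at hx hy
    simpa [hx.2, hy.2] using hs hx.1 hy.1 hxy
  calc s.card = ∑ a, (s.filter (·.1 = a)).card :=
        Finset.card_eq_sum_card_fiberwise fun _ _ ↦ Finset.mem_univ _
    _ ≤ ∑ _a : α, kIndepNum H k := Finset.sum_le_sum fun a _ ↦ hfiber a
    _ = Fintype.card α * kIndepNum H k := by simp

end KIndependence

theorem kIndepNum_cycleGraph (k : ℕ) : kIndepNum (cycleGraph (2 * k + 1)) k = 1 :=
  kIndepNum_eq_one_of_ediam_le <| by
    simpa [show (2 * k + 1) / 2 = k by omega] using ediam_cycleGraph_le (2 * k + 1)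

theorem kIndepNum_boxProd_completeGraph_fin_two_cycleGraph (k : ℕ) :
    kIndepNum (completeGraph (Fin 2) □ cycleGraph (2 * k + 1)) k = 2 := by
  refine le_antisymm ?_ ?_
  · calc kIndepNum (completeGraph (Fin 2) □ cycleGraph (2 * k + 1)) k
        ≤ Fintype.card (Fin 2) * kIndepNum (cycleGraph (2 * k + 1)) k := kIndepNum_boxProd_le _ _
      _ = 2 := by rw [kIndepNum_cycleGraph, Fintype.card_fin]
  · let x : Fin 2 × Fin (2 * k + 1) := (0, 0)
    let y : Fin 2 × Fin (2 * k + 1) := (1, ⟨k, by omega⟩)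
    have hxy : x ≠ y := by simp [x, y]
    have hdist : (k : ℕ∞) < (completeGraph (Fin 2) □ cycleGraph (2 * k + 1)).edist x y := by
      have hmin : min (y.2 - x.2).val (x.2 - y.2).val = k := by
        simp only [Fin.val_sub_eq_ite, Fin.le_def, x, y, Fin.val_zero]
        split_ifs <;> omega
      rw [edist_boxProd, edist_top_of_ne (by simp [x, y]), cycleGraph_edist, hmin]
      norm_cast
      omega
    have hindep : IsKIndepSet (completeGraph (Fin 2) □ cycleGraph (2 * k + 1)) k {x, y} := by
      rw [IsKIndepSet, Finset.coe_pair, Set.pairwise_pair]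
      exact fun _ ↦ ⟨hdist, by rwa [SimpleGraph.edist_comm]⟩
    simpa [Finset.card_pair hxy] using card_le_kIndepNum hindep

theorem kIndepNum_boxProd_K2_cycle (k : ℕ) (hk : 0 < k) :
    kIndepNum (completeGraph (Fin 2) □ cycleGraph (2 * k + 1)) k = 2 ∧
      2 = min (kIndepNum (completeGraph (Fin 2)) k * Fintype.card (Fin (2 * k + 1)))
              (kIndepNum (cycleGraph (2 * k + 1)) k * Fintype.card (Fin 2)) := by
  refine ⟨kIndepNum_boxProd_completeGraph_fin_two_cycleGraph k, ?_⟩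
  rw [kIndepNum_completeGraph hk, kIndepNum_cycleGraph, Fintype.card_fin, Fintype.card_fin]
  omega
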